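/- The fixed subring {f ∈ ℂ[T,T⁻¹] : σ(f) = f} of the involution σ is isomorphic as an ℝ-algebra to R₁ = ℝ[X,Y]/(X²+Y²+1), via an isomorphism sending X to −(i/2)·(T + T⁻¹) and Y to −(1/2)·(T − T⁻¹). -/

import Mathlib

noncomputable section

/-- The coordinate ring `R₁ = ℝ[X,Y]/(X²+Y²+1)` of the affine open `U₁ = D₊(z)` of the
real anisotropic conic `C = V(x²+y²+z²) ⊂ ℙ²_ℝ`. -/
def R1 : Type :=
  MvPolynomial (Fin 2) ℝ ⧸
    Ideal.span {(MvPolynomial.X 0 : MvPolynomial (Fin 2) ℝ) ^ 2 + MvPolynomial.X 1 ^ 2 + 1}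

instance : CommRing R1 := Ideal.Quotient.commRing _
instance : Algebra ℝ R1 := Ideal.Quotient.algebra ℝ

/-- `X`, the image of the first variable in `R₁` (the rational function `x/z`). -/
def X1 : R1 := Ideal.Quotient.mk _ (MvPolynomial.X 0)

/-- `Y`, the image of the second variable in `R₁` (the rational function `y/z`). -/
def Y1 : R1 := Ideal.Quotient.mk _ (MvPolynomial.X 1)


open LaurentPolynomial

abbrev LC := LaurentPolynomial ℂ

def uu : LC := C (-(Complex.I/2)) * (T 1 + T (-1))
def vv : LC := C (-(1/2) : ℂ) * (T 1 - T (-1))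

lemma Tmul : (T 1 : LC) * T (-1) = 1 := by rw [← T_add]; norm_num

/-- `c_k = T^k + (-1)^k T^{-k}` -/
def cc (k : ℤ) : LC := T k + C ((-1:ℂ)^k) * T (-k)
/-- `d_k = i (T^k - (-1)^k T^{-k})` -/
def dd (k : ℤ) : LC := C Complex.I * (T k - C ((-1:ℂ)^k) * T (-k))

lemma hI : (C Complex.I : LC) * C Complex.I = -1 := by
  rw [← map_mul, Complex.I_mul_I, map_neg, map_one]

lemma hw1 (k : ℤ) : ((-1:ℂ)^(k+1)) = -(-1:ℂ)^k := by
  rw [zpow_add₀ (by norm_num : (-1:ℂ) ≠ 0)]; ring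

lemma hw2 (k : ℤ) : ((-1:ℂ)^(k+2)) = (-1:ℂ)^k := by
  rw [zpow_add₀ (by norm_num : (-1:ℂ) ≠ 0)]; norm_num

lemma huv : uu^2 + vv^2 + 1 = 0 := by
  have hab := Tmul
  have hk1 : (C (-(Complex.I/2)) : LC)^2 = C (-(1/4) : ℂ) := by
    rw [← map_pow]; norm_num [div_pow, Complex.I_sq]
  have hk2 : (C (-(1/2):ℂ) : LC)^2 = C ((1/4) : ℂ) := by
    rw [← map_pow]; norm_num
  have hm : (C (-(1/4):ℂ) : LC) = - C ((1/4):ℂ) := by rw [← map_neg]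
  have hm2 : (C ((1/4):ℂ) : LC) * 4 = 1 := by
    rw [show (4:LC) = C (4:ℂ) from (map_ofNat C 4).symm, ← map_mul]; norm_num
  simp only [uu, vv, mul_pow, hk1, hk2, hm]
  linear_combination (-4 * (C ((1/4):ℂ) : LC)) * hab - hm2

lemma h2u : uu * 2 = C (-Complex.I) * (T 1 + T (-1)) := by
  rw [uu, show (2:LC) = C (2:ℂ) from (map_ofNat C 2).symm]
  rw [mul_right_comm, ← map_mul]
  norm_num

lemma h2v : vv * 2 = -(T 1 - T (-1)) := by
  rw [vv, show (2:LC) = C (2:ℂ) from (map_ofNat C 2).symm]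
  rw [mul_right_comm, ← map_mul]
  norm_num

lemma rec_c (k : ℤ) : cc (k+2) = uu * 2 * dd (k+1) - cc k := by
  rw [h2u, cc, dd, cc]
  rw [show k + 2 = k + 1 + 1 by ring, T_add, T_add, show -(k+1+1) = -k + -1 + -1 by ring,
    T_add, T_add, show -(k+1) = -k + -1 by ring, T_add, map_neg]
  rw [hw1 (k+1), hw1 k, neg_neg, map_neg]
  linear_combination (-(T k + C ((-1:ℂ)^k) * T (-k))) * Tmul +
    ((T 1 + T (-1)) * (T k * T 1 + C ((-1:ℂ)^k) * T (-k) * T (-1))) * hI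

lemma rec_d (k : ℤ) : dd (k+2) = -(uu * 2) * cc (k+1) - dd k := by
  rw [h2u, dd, cc, dd]
  rw [show k + 2 = k + 1 + 1 by ring, T_add, T_add, show -(k+1+1) = -k + -1 + -1 by ring,
    T_add, T_add, show -(k+1) = -k + -1 by ring, T_add, map_neg]
  rw [hw1 (k+1), hw1 k, neg_neg, map_neg]
  linear_combination (-(C Complex.I) * (T k - C ((-1:ℂ)^k) * T (-k))) * Tmul

lemma cc_zero : cc 0 = 2 := by
  rw [cc]; norm_num [T_zero]

lemma dd_zero : dd 0 = 0 := by
  rw [dd]; norm_num [T_zero]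

lemma cc_one : cc 1 = -(vv * 2) := by
  rw [cc, h2v]; norm_num; ring

lemma dd_one : dd 1 = -(uu * 2) := by
  rw [dd, h2u]; norm_num

lemma hww (k : ℤ) : ((-1:ℂ)^k) * ((-1:ℂ)^k) = 1 := by
  rw [← zpow_add₀ (by norm_num : (-1:ℂ) ≠ 0), show k + k = 2 * k by ring, zpow_mul]
  norm_num

lemma hwneg (k : ℤ) : ((-1:ℂ)^(-k)) = (-1:ℂ)^k := by
  rw [zpow_neg]
  exact inv_eq_of_mul_eq_one_right (hww k)

lemma cc_neg (k : ℤ) : cc (-k) = C ((-1:ℂ)^k) * cc k := by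
  rw [cc, cc, hwneg, neg_neg, mul_add, ← mul_assoc, ← map_mul, hww, map_one, one_mul, add_comm]

lemma dd_neg (k : ℤ) : dd (-k) = -(C ((-1:ℂ)^k) * dd k) := by
  rw [dd, dd, hwneg, neg_neg]
  have : (C ((-1:ℂ)^k) : LC) * C ((-1:ℂ)^k) = 1 := by rw [← map_mul, hww, map_one]
  linear_combination (- (C Complex.I * T (-k))) * this

lemma algC (x : ℝ) : algebraMap ℝ LC x = C ((x:ℂ)) := by
  rw [LaurentPolynomial.algebraMap_apply, Complex.coe_algebraMap]

lemma Cw_mem (S : Subalgebra ℝ LC) (k : ℤ) : (C ((-1:ℂ)^k) : LC) ∈ S := by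
  have : ((((-1:ℝ)^k : ℝ)) : ℂ) = (-1:ℂ)^k := by push_cast; ring
  rw [← this, ← algC]
  exact S.algebraMap_mem _

lemma cd_mem (S : Subalgebra ℝ LC) (hu : uu ∈ S) (hv : vv ∈ S) (k : ℤ) :
    cc k ∈ S ∧ dd k ∈ S := by
  have h2 : (2 : LC) ∈ S := by exact_mod_cast S.natCast_mem 2
  have key : ∀ n : ℕ, (cc n ∈ S ∧ dd n ∈ S) ∧ (cc (n+1) ∈ S ∧ dd (n+1) ∈ S) := by
    intro n
    induction n with
    | zero =>
      refine ⟨⟨?_, ?_⟩, ?_, ?_⟩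
      · rw [show ((0:ℕ):ℤ) = 0 by norm_num, cc_zero]; exact h2
      · rw [show ((0:ℕ):ℤ) = 0 by norm_num, dd_zero]; exact S.zero_mem
      · rw [show ((0:ℕ):ℤ) + 1 = 1 by norm_num, cc_one]
        exact S.neg_mem (S.mul_mem hv h2)
      · rw [show ((0:ℕ):ℤ) + 1 = 1 by norm_num, dd_one]
        exact S.neg_mem (S.mul_mem hu h2)
    | succ n ih =>
      obtain ⟨⟨hc, hd⟩, hc1, hd1⟩ := ih
      refine ⟨⟨?_, ?_⟩, ?_, ?_⟩
      · push_cast; exact hc1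
      · push_cast; exact hd1
      · have : ((n:ℤ) + 1 : ℤ) + 1 = (n:ℤ) + 2 := by ring
        push_cast
        rw [this, rec_c]
        exact S.sub_mem (S.mul_mem (S.mul_mem hu h2) hd1) hc
      · have : ((n:ℤ) + 1 : ℤ) + 1 = (n:ℤ) + 2 := by ring
        push_cast
        rw [this, rec_d]
        exact S.sub_mem (S.mul_mem (S.neg_mem (S.mul_mem hu h2)) hc1) hd
  rcases Int.natAbs_eq k with h | h
  · rw [h]; exact (key k.natAbs).1
  · rw [h, cc_neg, dd_neg]
    exact ⟨S.mul_mem (Cw_mem S _) (key k.natAbs).1.1,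
      S.neg_mem (S.mul_mem (Cw_mem S _) (key k.natAbs).1.2)⟩

section sigma
variable (σ : LC →+* LC)
    (hσC : ∀ a : ℂ, σ (C a) = C (starRingEnd ℂ a))
    (hσT : σ (T 1) = -T (-1))

include hσT in
lemma sigma_T_negone : σ (T (-1)) = -T 1 := by
  have h1 : (-(T (-1) : LC)) * σ (T (-1)) = 1 := by
    rw [← hσT, ← map_mul, Tmul, map_one]
  have h2 : (-(T 1 : LC)) * (-(T (-1) : LC)) = 1 := by
    rw [neg_mul_neg, Tmul]
  calc σ (T (-1)) = (-(T 1 : LC)) * ((-(T (-1) : LC)) * σ (T (-1))) := by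
        rw [← mul_assoc, h2, one_mul]
    _ = -T 1 := by rw [h1, mul_one]

include hσT in
lemma sigma_T (k : ℤ) : σ (T k) = C ((-1:ℂ)^k) * T (-k) := by
  induction k using Int.induction_on with
  | zero => simp
  | succ n ih =>
    rw [show ((n:ℤ) + 1) = n + 1 from rfl, T_add, map_mul, ih, hσT, hw1,
      show -((n:ℤ)+1) = -n + -1 by ring, T_add, map_neg]
    ring
  | pred n ih =>
    have e1 : (-(n:ℤ) - 1) = -n + -1 := by ring
    rw [e1, T_add, map_mul, ih, sigma_T_negone σ hσT,
      zpow_add₀ (by norm_num : (-1:ℂ) ≠ 0) (-(n:ℤ)) (-1), map_mul,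
      show ((-1:ℂ)^(-1:ℤ)) = -1 by norm_num,
      show (-(-(n:ℤ) + -1)) = (n:ℤ) + 1 by ring, T_add, neg_neg,
      show (C (-1:ℂ) : LC) = -1 by rw [map_neg, map_one]]
    ring
end sigma

section sigma2
variable (σ : LC →+* LC)
    (hσC : ∀ a : ℂ, σ (C a) = C (starRingEnd ℂ a))
    (hσT : σ (T 1) = -T (-1))

include hσC hσT in
lemma sigma_uu : σ uu = uu := by
  rw [uu, map_mul, map_add, hσC, hσT, sigma_T_negone σ hσT]
  rw [show (starRingEnd ℂ) (-(Complex.I/2)) = Complex.I/2 by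
    rw [map_neg, map_div₀, Complex.conj_I, show (starRingEnd ℂ) 2 = 2 by
      rw [show (2:ℂ) = ((2:ℝ):ℂ) by norm_num, Complex.conj_ofReal]]; ring]
  rw [show (Complex.I/2) = -(-(Complex.I/2)) by ring, map_neg]
  ring

include hσC hσT in
lemma sigma_vv : σ vv = vv := by
  rw [vv, map_mul, map_sub, hσC, hσT, sigma_T_negone σ hσT]
  rw [show (starRingEnd ℂ) (-(1/2:ℂ)) = -(1/2:ℂ) by
    rw [show (-(1/2:ℂ)) = ((-(1/2):ℝ):ℂ) by norm_num, Complex.conj_ofReal]]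
  ring

include hσC hσT in
lemma fixed_decomp (k : ℤ) (a : ℂ) :
    C a * T k + σ (C a * T k) = C ((a.re : ℂ)) * cc k + C ((a.im : ℂ)) * dd k := by
  rw [map_mul, hσC, sigma_T σ hσT, cc, dd]
  have ha : a = (a.re : ℂ) + (a.im : ℂ) * Complex.I := (Complex.re_add_im a).symm
  have hca : (starRingEnd ℂ) a = (a.re : ℂ) - (a.im : ℂ) * Complex.I := by
    simp [Complex.ext_iff]
  rw [show (C a : LC) = C ((a.re:ℂ)) + C ((a.im:ℂ)) * C Complex.I by
      rw [← map_mul, ← map_add, ← ha],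
    show (C ((starRingEnd ℂ) a) : LC) = C ((a.re:ℂ)) - C ((a.im:ℂ)) * C Complex.I by
      rw [← map_mul, ← map_sub, ← hca]]
  ring

include hσC hσT in
lemma fixed_mem (S : Subalgebra ℝ LC) (hu : uu ∈ S) (hv : vv ∈ S)
    (f : LC) (hf : σ f = f) : f ∈ S := by
  have key : ∀ g : LC, g + σ g ∈ S := by
    intro g
    induction g using LaurentPolynomial.induction_on' with
    | add p q hp hq =>
      rw [map_add, show p + q + (σ p + σ q) = (p + σ p) + (q + σ q) by ring]
      exact S.add_mem hp hq
    | C_mul_T n a =>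
      rw [fixed_decomp σ hσC hσT]
      have hre : (C ((a.re:ℂ)) : LC) ∈ S := by rw [← algC]; exact S.algebraMap_mem _
      have him : (C ((a.im:ℂ)) : LC) ∈ S := by rw [← algC]; exact S.algebraMap_mem _
      exact S.add_mem (S.mul_mem hre (cd_mem S hu hv n).1) (S.mul_mem him (cd_mem S hu hv n).2)
  have : f = (1/2 : ℝ) • (f + σ f) := by
    rw [hf, smul_add, ← add_smul]
    norm_num
  rw [this]
  exact S.smul_mem (key f) _
end sigma2

def ev (z : ℂˣ) : LC →ₐ[ℂ] ℂ :=
  AddMonoidAlgebra.lift ℂ ℂ ℤ ((Units.coeHom ℂ).comp (zpowersHom ℂˣ z))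

lemma ev_T (z : ℂˣ) (n : ℤ) : ev z (T n) = (z:ℂ)^n := by
  rw [ev, T]
  rw [AddMonoidAlgebra.lift_single]
  simp

lemma ev_C (z : ℂˣ) (a : ℂ) : ev z (C a) = a := by
  rw [ev, show (C a : LC) = AddMonoidAlgebra.single 0 a from rfl]
  rw [AddMonoidAlgebra.lift_single]
  simp

lemma ev_uu (z : ℂˣ) : ev z uu = -(Complex.I/2) * ((z:ℂ) + (z:ℂ)⁻¹) := by
  rw [uu, map_mul, map_add, ev_T, ev_T, ev_C, zpow_one, zpow_neg, zpow_one]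

lemma ev_vv (z : ℂˣ) : ev z vv = -(1/2:ℂ) * ((z:ℂ) - (z:ℂ)⁻¹) := by
  rw [vv, map_mul, map_sub, ev_T, ev_T, ev_C, zpow_one, zpow_neg, zpow_one]

lemma ev_aeval (z : ℂˣ) (x : LC) (p : Polynomial ℝ) :
    ev z (Polynomial.aeval x p) = Polynomial.aeval (ev z x) p :=
  (Polynomial.aeval_algHom_apply ((ev z).restrictScalars ℝ) x p).symm


lemma real_inj {a b : ℝ} (ha : 2 ≤ a) (hb : 2 ≤ b) (h : a + a⁻¹ = b + b⁻¹) : a = b := by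
  have ha0 : a ≠ 0 := by linarith
  have hb0 : b ≠ 0 := by linarith
  field_simp at h
  have key : (a - b) * (a*b - 1) = 0 := by nlinarith [h]
  rcases mul_eq_zero.1 key with h' | h'
  · linarith
  · nlinarith

lemma vanish_at (p₀ p₁ : Polynomial ℝ)
    (H : Polynomial.aeval uu p₀ + Polynomial.aeval uu p₁ * vv = 0)
    (t : ℝ) (ht : 2 ≤ t) :
    Polynomial.aeval (-(Complex.I/2) * ((t:ℂ) + (t:ℂ)⁻¹)) p₀ = 0 ∧
    Polynomial.aeval (-(Complex.I/2) * ((t:ℂ) + (t:ℂ)⁻¹)) p₁ = 0 := by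
  have htpos : (0:ℝ) < t := by linarith
  have htne : (t:ℂ) ≠ 0 := by exact_mod_cast htpos.ne'
  set w : ℂ := -(Complex.I/2) * ((t:ℂ) + (t:ℂ)⁻¹) with hwdef
  set z : ℂˣ := Units.mk0 (t:ℂ) htne with hz
  have hzval : (z:ℂ) = (t:ℂ) := rfl
  have hzinv : ((z⁻¹:ℂˣ):ℂ) = ((t:ℂ))⁻¹ := rfl
  have hw : ev z uu = w := by rw [ev_uu, hzval]
  have hw' : ev z⁻¹ uu = w := by rw [ev_uu, hzinv, inv_inv, hwdef]; ring
  have E1 := congrArg (ev z) H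
  have E2 := congrArg (ev z⁻¹) H
  rw [map_add, map_mul, map_zero, ev_aeval, ev_aeval, hw, ev_vv, hzval] at E1
  rw [map_add, map_mul, map_zero, ev_aeval, ev_aeval, hw', ev_vv, hzinv, inv_inv] at E2
  have hv : ((t:ℂ) - ((t:ℂ))⁻¹) ≠ 0 := by
    have hr : (t:ℝ) - t⁻¹ ≠ 0 := by
      have hinv : t * t⁻¹ = 1 := mul_inv_cancel₀ htpos.ne'
      nlinarith [hinv, inv_pos.2 htpos]
    intro hc
    apply hr
    have : (((t - t⁻¹ : ℝ)):ℂ) = 0 := by push_cast; exact hc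
    exact_mod_cast this
  constructor
  · have h2 : 2 * Polynomial.aeval w p₀ = 0 := by linear_combination E1 + E2
    have := mul_eq_zero.1 h2
    rcases this with h' | h'
    · norm_num at h'
    · exact h'
  · have h2 : Polynomial.aeval w p₁ * ((t:ℂ) - ((t:ℂ))⁻¹) = 0 := by
      linear_combination E2 - E1
    rcases mul_eq_zero.1 h2 with h' | h'
    · exact h'
    · exact absurd h' hv

def wpt (n : ℕ) : ℂ :=
  -(Complex.I/2) * (((((n:ℝ)+2) : ℝ):ℂ) + (((((n:ℝ)+2) : ℝ):ℂ))⁻¹)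

lemma wpt_inj : Function.Injective wpt := by
  intro n m h
  rw [wpt, wpt] at h
  have h2 : (-(Complex.I/2)) ≠ 0 := by simp [Complex.I_ne_zero]
  have h' := mul_left_cancel₀ h2 h
  rw [← Complex.ofReal_inv, ← Complex.ofReal_inv, ← Complex.ofReal_add,
    ← Complex.ofReal_add] at h'
  have h'' := Complex.ofReal_inj.1 h'
  have hn : (2:ℝ) ≤ (n:ℝ) + 2 := by have := Nat.cast_nonneg (α := ℝ) n; linarith
  have hm : (2:ℝ) ≤ (m:ℝ) + 2 := by have := Nat.cast_nonneg (α := ℝ) m; linarith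
  have := real_inj hn hm h''
  have : (n:ℝ) = m := by linarith
  exact_mod_cast this

lemma inj_key (p₀ p₁ : Polynomial ℝ)
    (H : Polynomial.aeval uu p₀ + Polynomial.aeval uu p₁ * vv = 0) :
    p₀ = 0 ∧ p₁ = 0 := by
  have vanish : ∀ n : ℕ, Polynomial.aeval (wpt n) p₀ = 0 ∧ Polynomial.aeval (wpt n) p₁ = 0 := by
    intro n
    have hn : (2:ℝ) ≤ (n:ℝ) + 2 := by have := Nat.cast_nonneg (α := ℝ) n; linarith
    exact vanish_at p₀ p₁ H ((n:ℝ)+2) hn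
  have inj : Function.Injective (algebraMap ℝ ℂ) := (algebraMap ℝ ℂ).injective
  constructor
  · have hmap : p₀.map (algebraMap ℝ ℂ) = 0 := by
      apply Polynomial.eq_zero_of_infinite_isRoot
      apply Set.infinite_of_injective_forall_mem (f := wpt) wpt_inj
      intro n
      simp only [Set.mem_setOf_eq, Polynomial.IsRoot, Polynomial.eval_map,
        ← Polynomial.aeval_def]
      exact (vanish n).1
    exact (Polynomial.map_eq_zero_iff inj).1 hmap
  · have hmap : p₁.map (algebraMap ℝ ℂ) = 0 := by
      apply Polynomial.eq_zero_of_infinite_isRoot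
      apply Set.infinite_of_injective_forall_mem (f := wpt) wpt_inj
      intro n
      simp only [Set.mem_setOf_eq, Polynomial.IsRoot, Polynomial.eval_map,
        ← Polynomial.aeval_def]
      exact (vanish n).2
    exact (Polynomial.map_eq_zero_iff inj).1 hmap

def ψ : MvPolynomial (Fin 2) ℝ →ₐ[ℝ] LC := MvPolynomial.aeval ![uu, vv]

lemma ψrel : ψ ((MvPolynomial.X 0 : MvPolynomial (Fin 2) ℝ) ^ 2 + MvPolynomial.X 1 ^ 2 + 1) = 0 := by
  simp only [ψ, map_add, map_pow, map_one, MvPolynomial.aeval_X]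
  simpa using huv

def Φ : R1 →ₐ[ℝ] LC :=
  Ideal.Quotient.liftₐ _ ψ (by
    intro a ha
    refine Submodule.span_induction ?_ ?_ ?_ ?_ ha
    · rintro x rfl; exact ψrel
    · exact map_zero ψ
    · intro x y _ _ hx hy; rw [map_add, hx, hy, add_zero]
    · intro r x _ hx; rw [smul_eq_mul, map_mul, hx, mul_zero])

lemma Φ_mk (p : MvPolynomial (Fin 2) ℝ) : Φ (Ideal.Quotient.mk _ p) = ψ p := by
  rfl

lemma Φ_X1 : Φ X1 = uu := by rw [X1, Φ_mk]; simp [ψ]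
lemma Φ_Y1 : Φ Y1 = vv := by rw [Y1, Φ_mk]; simp [ψ]

lemma hY2 : (Y1 : R1)^2 = -(X1^2 + 1) := by
  have h : (Ideal.Quotient.mk _ ((MvPolynomial.X 0 : MvPolynomial (Fin 2) ℝ) ^ 2
      + MvPolynomial.X 1 ^ 2 + 1) : R1) = 0 := by
    rw [Ideal.Quotient.eq_zero_iff_mem]
    exact Ideal.subset_span rfl
  rw [map_add, map_add, map_pow, map_pow, map_one] at h
  rw [show (Y1:R1)^2 = (Ideal.Quotient.mk _ (MvPolynomial.X 1))^2 from rfl]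
  rw [show (X1:R1) = Ideal.Quotient.mk _ (MvPolynomial.X 0) from rfl]
  change (Y1:R1)^2 = -((X1:R1)^2+1)
  have h' : (X1:R1)^2 + Y1^2 + 1 = 0 := h
  rw [eq_neg_iff_add_eq_zero, add_comm, add_right_comm]; exact h'

lemma reprR1 (z : R1) : ∃ p₀ p₁ : Polynomial ℝ,
    z = Polynomial.aeval X1 p₀ + Polynomial.aeval X1 p₁ * Y1 := by
  obtain ⟨p, rfl⟩ := Ideal.Quotient.mk_surjective z
  induction p using MvPolynomial.induction_on with
  | C a =>
    refine ⟨Polynomial.C a, 0, ?_⟩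
    simp only [Polynomial.aeval_C, map_zero, zero_mul, add_zero]
    rfl
  | add p q hp hq =>
    obtain ⟨p0, p1, hp⟩ := hp
    obtain ⟨q0, q1, hq⟩ := hq
    exact ⟨p0 + q0, p1 + q1, by
      rw [map_add, hp, hq, map_add, map_add]; refine (?_ : (_ : R1) + (_ : R1) = _); ring⟩
  | mul_X p i hp =>
    obtain ⟨p0, p1, hp⟩ := hp
    fin_cases i <;> simp only [Fin.isValue, Fin.zero_eta, Fin.mk_one]
    · refine ⟨p0 * Polynomial.X, p1 * Polynomial.X, ?_⟩
      rw [map_mul, hp, map_mul, map_mul, Polynomial.aeval_X]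
      rw [show (Ideal.Quotient.mk _ (MvPolynomial.X 0) : R1) = X1 from rfl]
      refine (?_ : (_ : R1) * (_ : R1) = _)
      ring
    · refine ⟨-(p1 * (Polynomial.X^2 + 1)), p0, ?_⟩
      rw [map_mul, hp]
      rw [show (Ideal.Quotient.mk _ (MvPolynomial.X 1) : R1) = Y1 from rfl]
      rw [map_neg, map_mul, map_add, map_pow, Polynomial.aeval_X, map_one]
      refine (?_ : (_ : R1) * (_ : R1) = _)
      have := hY2
      ring_nf
      linear_combination (Polynomial.aeval X1 p1) * hY2

/-- Let `σ` be the ring involution of `ℂ[T,T⁻¹]` determined by complex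
conjugation on coefficients and `T ↦ −T⁻¹`.  The fixed subring `{f | σ(f) = f}` is
isomorphic as an `ℝ`-algebra to `R₁ = ℝ[X,Y]/(X²+Y²+1)`, via an isomorphism sending
`X` to `−(i/2)·(T + T⁻¹)` and `Y` to `−(1/2)·(T − T⁻¹)` (compatibility with the
`ℝ`-algebra structures being expressed by the condition on real constants). -/
theorem statement_17 (σ : LaurentPolynomial ℂ →+* LaurentPolynomial ℂ)
    (hσC : ∀ a : ℂ, σ (LaurentPolynomial.C a) = LaurentPolynomial.C (starRingEnd ℂ a))
    (hσT : σ (LaurentPolynomial.T 1) = -LaurentPolynomial.T (-1)) :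
    ∃ e : R1 ≃+* σ.eqLocus (RingHom.id (LaurentPolynomial ℂ)),
      (∀ a : ℝ, (e (algebraMap ℝ R1 a) : LaurentPolynomial ℂ) =
        LaurentPolynomial.C (a : ℂ)) ∧
      (e X1 : LaurentPolynomial ℂ) =
        LaurentPolynomial.C (-(Complex.I / 2)) *
          (LaurentPolynomial.T 1 + LaurentPolynomial.T (-1)) ∧
      (e Y1 : LaurentPolynomial ℂ) =
        LaurentPolynomial.C (-(1 / 2) : ℂ) *
          (LaurentPolynomial.T 1 - LaurentPolynomial.T (-1)) := by
  classical
  -- the fixed subring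
  have sigma_psi : ∀ p : MvPolynomial (Fin 2) ℝ, σ (ψ p) = ψ p := by
    intro p
    induction p using MvPolynomial.induction_on with
    | C a =>
      rw [show (ψ (MvPolynomial.C a) : LC) = C ((a:ℂ)) by
        rw [show (MvPolynomial.C a : MvPolynomial (Fin 2) ℝ) =
          algebraMap ℝ (MvPolynomial (Fin 2) ℝ) a from rfl, AlgHom.commutes, algC]]
      rw [hσC, Complex.conj_ofReal]
    | add p q hp hq => rw [map_add, map_add, hp, hq]
    | mul_X p i hp =>
      rw [map_mul, map_mul, hp]
      fin_cases i <;> simp only [Fin.isValue, Fin.zero_eta, Fin.mk_one]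
      · rw [show (ψ (MvPolynomial.X 0) : LC) = uu by simp [ψ], sigma_uu σ hσC hσT]
      · rw [show (ψ (MvPolynomial.X 1) : LC) = vv by simp [ψ], sigma_vv σ hσC hσT]
  have hmem : ∀ z : R1, Φ z ∈ σ.eqLocus (RingHom.id LC) := by
    intro z
    obtain ⟨p, rfl⟩ := Ideal.Quotient.mk_surjective z
    rw [Φ_mk]
    exact sigma_psi p
  set Φ' : R1 →+* σ.eqLocus (RingHom.id LC) :=
    (Φ.toRingHom).codRestrict _ hmem with hΦ'
  have Φinj : Function.Injective Φ := by
    rw [injective_iff_map_eq_zero]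
    intro z hz
    obtain ⟨p₀, p₁, rfl⟩ := reprR1 z
    rw [map_add, map_mul, ← Polynomial.aeval_algHom_apply, ← Polynomial.aeval_algHom_apply,
      Φ_X1, Φ_Y1] at hz
    obtain ⟨h0, h1⟩ := inj_key p₀ p₁ hz
    rw [h0, h1]; simp
  have hbij : Function.Bijective Φ' := by
    constructor
    · intro x y hxy
      apply Φinj
      exact congrArg Subtype.val hxy
    · rintro ⟨f, hf⟩
      have hf' : σ f = f := hf
      have : f ∈ (Φ.range : Subalgebra ℝ LC) := by
        apply fixed_mem σ hσC hσT
        · exact ⟨X1, Φ_X1⟩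
        · exact ⟨Y1, Φ_Y1⟩
        · exact hf'
      obtain ⟨z, hz⟩ := this
      exact ⟨z, Subtype.ext hz⟩
  refine ⟨RingEquiv.ofBijective Φ' hbij, ?_, ?_, ?_⟩
  · intro a
    show (Φ (algebraMap ℝ R1 a) : LC) = C ((a:ℂ))
    rw [AlgHom.commutes, algC]
  · show (Φ X1 : LC) = _
    rw [Φ_X1, uu]
  · show (Φ Y1 : LC) = _
    rw [Φ_Y1, vv]
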